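/- If M(z,ζ) is the 2×2 matrix with entries M₁₁ = (z + z⁻¹) + (1/4)(ζ + ζ̄ + ζ z⁻¹ + ζ̄ z) − 3, M₁₂ = M₂₁ = (√3/4)(ζ + ζ̄ − ζ z⁻¹ − ζ̄ z), M₂₂ = (3/4)(ζ + ζ̄ + ζ z⁻¹ + ζ̄ z) − 3, then for |ζ| = 1 the function z ↦ z²·det M(z,ζ) is a polynomial of degree 4 in z, and if z₀ is a root of det M(·,ζ) = 0 then so is ζ/z₀. -/

import Mathlib

/-!
Put `a = z + z⁻¹`, `b = ζ z⁻¹ + ζ̄ z` and `s = ζ + ζ̄`. Since `(√3)² = 3`, the determinant collapses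
to `(3/4) a b + (3/4 s - 3)(a + b) - 3 s + 9`, which is symmetric in `a` and `b`; and since
`ζ̄ = ζ⁻¹`, the substitution `z ↦ ζ / z` exchanges `a` and `b`. Hence `det M(ζ/z, ζ) = det M(z, ζ)`.
Multiplying by `z²` turns `a` and `b` into the quadratics `z² + 1` and `ζ̄ z² + ζ`, which gives a
quartic with leading coefficient `(3/4) ζ̄`.
-/

open Complex ComplexConjugate Polynomial

section

variable {K : Type*} [Field K]

/-- `det M(z, ζ)` in the variables `a`, `b`, `s` above, with `ζ'` in place of `ζ̄`. -/
def cauchyBornDet (ζ ζ' z : K) : K :=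
  3 / 4 * (z + z⁻¹) * (ζ * z⁻¹ + ζ' * z)
    + (3 / 4 * (ζ + ζ') - 3) * (z + z⁻¹ + (ζ * z⁻¹ + ζ' * z)) - 3 * (ζ + ζ') + 9

lemma div_add_inv_div_of_mul_eq_one {ζ ζ' : K} (hζ : ζ * ζ' = 1) (z : K) :
    ζ / z + (ζ / z)⁻¹ = ζ * z⁻¹ + ζ' * z := by
  rw [inv_div, div_eq_mul_inv, div_eq_mul_inv, ← eq_inv_of_mul_eq_one_right hζ]
  ring

lemma mul_inv_div_add_mul_div_of_mul_eq_one {ζ ζ' : K} (hζ : ζ * ζ' = 1) (z : K) :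
    ζ * (ζ / z)⁻¹ + ζ' * (ζ / z) = z + z⁻¹ := by
  rw [inv_div, div_eq_mul_inv, div_eq_mul_inv, ← eq_inv_of_mul_eq_one_right hζ]
  linear_combination (z + z⁻¹) * hζ

lemma cauchyBornDet_div {ζ ζ' : K} (hζ : ζ * ζ' = 1) (z : K) :
    cauchyBornDet ζ ζ' (ζ / z) = cauchyBornDet ζ ζ' z := by
  unfold cauchyBornDet
  rw [div_add_inv_div_of_mul_eq_one hζ, mul_inv_div_add_mul_div_of_mul_eq_one hζ]
  ring

noncomputable def cauchyBornPoly (ζ ζ' : K) : K[X] :=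
  C (3 / 4 * ζ') * X ^ 4 + C ((3 / 4 * (ζ + ζ') - 3) * (1 + ζ')) * X ^ 3
    + C (9 - 9 / 4 * (ζ + ζ')) * X ^ 2 + C ((3 / 4 * (ζ + ζ') - 3) * (1 + ζ)) * X + C (3 / 4 * ζ)

lemma eval_cauchyBornPoly [CharZero K] (ζ ζ' : K) {z : K} (hz : z ≠ 0) :
    (cauchyBornPoly ζ ζ').eval z = z ^ 2 * cauchyBornDet ζ ζ' z := by
  simp only [cauchyBornPoly, cauchyBornDet, eval_add, eval_mul, eval_pow, eval_C, eval_X]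
  field_simp
  ring

lemma degree_cauchyBornPoly [CharZero K] (ζ : K) {ζ' : K} (hζ' : ζ' ≠ 0) :
    (cauchyBornPoly ζ ζ').degree = 4 := by
  unfold cauchyBornPoly
  compute_degree!

end

/-- For the 2×2 Cauchy–Born symbol `M(z,ζ)` of Example 2 with `|ζ| = 1`,
the function `z ↦ z² det M(z,ζ)` is (given by) a polynomial of degree 4 in `z`,
and if `z₀ ≠ 0` is a root of `det M(·,ζ)` then so is `ζ/z₀`. -/
theorem stmt19 (ζ : ℂ) (hζ : ‖ζ‖ = 1) :
    let M11 : ℂ → ℂ := fun z =>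
      (z + z⁻¹) + (1 / 4) * (ζ + starRingEnd ℂ ζ + ζ * z⁻¹ + starRingEnd ℂ ζ * z) - 3
    let M12 : ℂ → ℂ := fun z =>
      ((Real.sqrt 3 : ℝ) : ℂ) / 4 * (ζ + starRingEnd ℂ ζ - ζ * z⁻¹ - starRingEnd ℂ ζ * z)
    let M22 : ℂ → ℂ := fun z =>
      (3 / 4) * (ζ + starRingEnd ℂ ζ + ζ * z⁻¹ + starRingEnd ℂ ζ * z) - 3
    let detM : ℂ → ℂ := fun z => M11 z * M22 z - M12 z * M12 z
    (∃ p : Polynomial ℂ, p.degree = 4 ∧ ∀ z : ℂ, z ≠ 0 → p.eval z = z ^ 2 * detM z) ∧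
    (∀ z₀ : ℂ, z₀ ≠ 0 → detM z₀ = 0 → detM (ζ / z₀) = 0) := by
  intro M11 M12 M22 detM
  have hζζ : ζ * conj ζ = 1 := by
    rw [mul_conj', hζ, ofReal_one, one_pow]
  have hsqrt : ((Real.sqrt 3 : ℝ) : ℂ) * ((Real.sqrt 3 : ℝ) : ℂ) = 3 := by
    rw [← ofReal_mul, Real.mul_self_sqrt (by norm_num), ofReal_ofNat]
  have hdet : ∀ z, detM z = cauchyBornDet ζ (conj ζ) z := fun z => by
    simp only [detM, M11, M12, M22, cauchyBornDet]
    linear_combination -(ζ + conj ζ - ζ * z⁻¹ - conj ζ * z) ^ 2 / 16 * hsqrt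
  refine ⟨⟨cauchyBornPoly ζ (conj ζ), degree_cauchyBornPoly ζ ?_, fun z hz => ?_⟩,
    fun z₀ _ hz₀ => ?_⟩
  · exact right_ne_zero_of_mul_eq_one hζζ
  · rw [eval_cauchyBornPoly _ _ hz, hdet]
  · rw [hdet, cauchyBornDet_div hζζ, ← hdet, hz₀]
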